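/- If f : GF(p)^{2m} → GF(p) is a feasible Latin square type function, then f is regular bent (W_f(x) = ζ^{f*(x)} p^m for all x for some dual f*); if f is of feasible negative Latin square type, then f is (-1)-weakly regular bent (W_f(x) = -ζ^{f*(x)} p^m for all x). -/

import Mathlib

/-!
Every character `χ_x(y) = ζ^⟨x, y⟩` is a common eigenvector of the Cayley graphs `Γ_i`, with
eigenvalue `λ_i(x) = ∑_{d ∈ D_i} χ_x(d)`, and `W_f(x) = 1 + ∑_i ζ^i λ_i(x)`. For `x ≠ 0` the
vector `χ_x` is orthogonal to the all-ones vector, so the strongly regular parameters force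
`λ_i(x) ∈ {-r_i, N - r_i}`. Since `∑_i λ_i(x) = -1` and `∑_i r_i = N + 1`, exactly one index `j`
has `λ_j(x) = N - r_j`, whence `W_f(x) = 1 - ∑_i ζ^i r_i + N ζ^j = N ζ^j`. At `x = 0` the
eigenvalues are the degrees `(N - 1) r_i`, and `W_f(0) = N`.
-/

open Finset BigOperators

noncomputable def zeta (p : ℕ) : ℂ := Complex.exp (2 * Real.pi * Complex.I / p)

def ip {p n : ℕ} (x y : Fin n → ZMod p) : ZMod p := ∑ i, x i * y i

noncomputable def walsh {p n : ℕ} [NeZero p]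
    (f : (Fin n → ZMod p) → ZMod p) (x : Fin n → ZMod p) : ℂ :=
  ∑ y, zeta p ^ (f y - ip x y).val

/-- The component Cayley graph `Γ_i` of `f` on `GF(p)^n`: distinct vertices `x, y` are
adjacent iff `x - y` lies in the connection set `D_i = {z ≠ 0 | f z = i}` (for an even `f`
the symmetrization in `fromRel` is harmless).  For `i ≠ 0` this set is `f⁻¹(i)`, and for
`i = 0` it is `f⁻¹(0) \ {0}`; i.e. `i = 0` plays the role of the index `p`. -/
def cayleyGraph {p n : ℕ} (f : (Fin n → ZMod p) → ZMod p) (i : ZMod p) :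
    SimpleGraph (Fin n → ZMod p) :=
  SimpleGraph.fromRel (fun x y => f (x - y) = i)

open Matrix

namespace SimpleGraph

variable {V : Type*} [Fintype V] [DecidableEq V] {G : SimpleGraph V} [DecidableRel G.Adj]
  {n k ℓ μ : ℕ} {α : Type*} [Field α]

/-- On eigenvectors orthogonal to the all-ones vector the complement acts as `-1 - A`, so the
identity `A² = k I + ℓ A + μ Aᶜ` becomes a quadratic equation for the eigenvalue. -/
theorem IsSRGWith.eigenvalue_sq_eq (h : G.IsSRGWith n k ℓ μ) {v : V → α} {θ : α}
    (hv : G.adjMatrix α *ᵥ v = θ • v) (hsum : ∑ u, v u = 0) (hne : v ≠ 0) :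
    θ ^ 2 = k + ℓ * θ - μ * (1 + θ) := by
  classical
  have hcompl : Gᶜ.adjMatrix α *ᵥ v = (-1 - θ) • v := by
    have hJ : of (1 : V → V → α) *ᵥ v = 0 := by
      ext u; simp [mulVec, dotProduct, hsum]
    rw [← compl_adjMatrix_eq_adjMatrix_compl, ← add_sub_cancel_left (1 + G.adjMatrix α)
      (G.adjMatrix α).compl, one_add_adjMatrix_add_compl_adjMatrix_eq_of_one,
      sub_mulVec, add_mulVec, hJ, hv, one_mulVec]
    ext u
    simp only [Pi.sub_apply, Pi.zero_apply, Pi.add_apply, Pi.smul_apply, smul_eq_mul]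
    ring
  have hsq : (θ ^ 2) • v = (k + ℓ * θ - μ * (1 + θ)) • v := by
    have := congrArg (· *ᵥ v) h.matrix_eq
    simp only [pow_two, ← mulVec_mulVec, hv, mulVec_smul, add_mulVec, smul_mulVec, hcompl,
      one_mulVec] at this
    rw [← Nat.cast_smul_eq_nsmul α k v, ← Nat.cast_smul_eq_nsmul α ℓ (θ • v),
      ← Nat.cast_smul_eq_nsmul α μ ((-1 - θ) • v)] at this
    rw [pow_two, mul_smul, this]
    ext u
    simp only [Pi.add_apply, Pi.smul_apply, smul_eq_mul]
    ring
  obtain ⟨u, hu⟩ := Function.ne_iff.mp hne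
  exact mul_right_cancel₀ hu (by simpa using congrFun hsq u)

/-- For Latin square type parameters `(N², (N-1)R, N + R² - 3R, R² - R)` the quadratic factors
as `(θ + R)(θ - (N - R)) = 0`. -/
theorem IsSRGWith.eigenvalue_eq_neg_or_eq_sub [CharZero α] (h : G.IsSRGWith n k ℓ μ) {N R : ℤ}
    (hk : (k : ℤ) = (N - 1) * R) (hℓ : (ℓ : ℤ) = N + R ^ 2 - 3 * R) (hμ : (μ : ℤ) = R ^ 2 - R)
    {v : V → α} {θ : α} (hv : G.adjMatrix α *ᵥ v = θ • v) (hsum : ∑ u, v u = 0) (hne : v ≠ 0) :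
    θ = -R ∨ θ = N - R := by
  have hθ := h.eigenvalue_sq_eq hv hsum hne
  have hk' : (k : α) = (N - 1) * R := by exact_mod_cast hk
  have hℓ' : (ℓ : α) = N + R ^ 2 - 3 * R := by exact_mod_cast hℓ
  have hμ' : (μ : α) = R ^ 2 - R := by exact_mod_cast hμ
  rw [hk', hℓ', hμ'] at hθ
  have : (θ + R) * (θ - (N - R)) = 0 := by linear_combination hθ
  rcases mul_eq_zero.mp this with h | h
  · exact Or.inl (by linear_combination h)
  · exact Or.inr (by linear_combination h)

end SimpleGraph

section Characters

variable (p : ℕ) [NeZero p] {n : ℕ}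

noncomputable def psi : AddChar (ZMod p) ℂ :=
  AddChar.zmodChar p (Complex.isPrimitiveRoot_exp p (NeZero.ne p)).pow_eq_one

theorem psi_apply (a : ZMod p) : psi p a = zeta p ^ a.val :=
  AddChar.zmodChar_apply _ _

theorem psi_ne_one_of_ne_zero {a : ZMod p} (ha : a ≠ 0) : psi p a ≠ 1 := by
  rw [psi_apply]
  exact (Complex.isPrimitiveRoot_exp p (NeZero.ne p)).pow_ne_one_of_pos_of_lt
    ((ZMod.val_ne_zero a).mpr ha) (ZMod.val_lt a)

theorem sum_psi [Fact (1 < p)] : ∑ a : ZMod p, psi p a = 0 :=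
  AddChar.sum_eq_zero_of_ne_one (AddChar.ne_one_iff.mpr ⟨1, psi_ne_one_of_ne_zero p one_ne_zero⟩)

def ipHom (x : Fin n → ZMod p) : (Fin n → ZMod p) →+ ZMod p :=
  AddMonoidHom.mk' (ip x) (dotProduct_add x)

noncomputable def chi (x : Fin n → ZMod p) : AddChar (Fin n → ZMod p) ℂ :=
  (psi p).compAddMonoidHom (ipHom p x)

theorem chi_apply (x y : Fin n → ZMod p) : chi p x y = psi p (ip x y) := rfl

theorem chi_zero_apply (y : Fin n → ZMod p) : chi p 0 y = 1 := by
  rw [chi_apply, show ip 0 y = 0 from zero_dotProduct y, AddChar.map_zero_eq_one]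

theorem sum_chi_of_ne_zero {x : Fin n → ZMod p} (hx : x ≠ 0) : ∑ y, chi p x y = 0 := by
  obtain ⟨i, hi⟩ := Function.ne_iff.mp hx
  refine AddChar.sum_eq_zero_of_ne_one (AddChar.ne_one_iff.mpr ⟨Pi.single i 1, ?_⟩)
  rw [chi_apply, show ip x (Pi.single i 1) = x i from
    (dotProduct_single x 1 i).trans (mul_one _)]
  exact psi_ne_one_of_ne_zero p hi

end Characters

section Cayley

variable {p n : ℕ} [NeZero p] (f : (Fin n → ZMod p) → ZMod p)

def connectionSet (i : ZMod p) : Finset (Fin n → ZMod p) := {z ∈ univ.erase 0 | f z = i}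

theorem mem_connectionSet {i : ZMod p} {z : Fin n → ZMod p} :
    z ∈ connectionSet f i ↔ z ≠ 0 ∧ f z = i := by
  simp [connectionSet]

noncomputable def cayleyEigenvalue (x : Fin n → ZMod p) (i : ZMod p) : ℂ :=
  ∑ d ∈ connectionSet f i, chi p x d

variable {f}

theorem cayleyGraph_adj_iff (heven : ∀ x, f (-x) = f x) {i : ZMod p} {u w : Fin n → ZMod p} :
    (cayleyGraph f i).Adj u w ↔ w - u ∈ connectionSet f i := by
  rw [cayleyGraph, SimpleGraph.fromRel_adj, mem_connectionSet, ← neg_sub w u, heven,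
    or_self, sub_ne_zero, ne_comm]

theorem cayleyGraph_neighborFinset (heven : ∀ x, f (-x) = f x) {i : ZMod p}
    [DecidableRel (cayleyGraph f i).Adj] (u : Fin n → ZMod p) :
    (cayleyGraph f i).neighborFinset u = (connectionSet f i).map (addLeftEmbedding u) := by
  ext w
  rw [SimpleGraph.mem_neighborFinset, cayleyGraph_adj_iff heven, mem_map]
  constructor
  · exact fun hw => ⟨w - u, hw, add_sub_cancel u w⟩
  · rintro ⟨d, hd, rfl⟩
    simpa using hd

theorem cayleyGraph_adjMatrix_mulVec_chi (heven : ∀ x, f (-x) = f x) {i : ZMod p}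
    [DecidableRel (cayleyGraph f i).Adj] (x : Fin n → ZMod p) :
    (cayleyGraph f i).adjMatrix ℂ *ᵥ ⇑(chi p x) = cayleyEigenvalue f x i • ⇑(chi p x) := by
  ext u
  rw [SimpleGraph.adjMatrix_mulVec_apply, cayleyGraph_neighborFinset heven, sum_map,
    Pi.smul_apply, smul_eq_mul, cayleyEigenvalue, sum_mul]
  exact sum_congr rfl fun d _ => by rw [addLeftEmbedding_apply, AddChar.map_add_eq_mul, mul_comm]

theorem cayleyGraph_degree (heven : ∀ x, f (-x) = f x) {i : ZMod p}
    [DecidableRel (cayleyGraph f i).Adj] (u : Fin n → ZMod p) :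
    (cayleyGraph f i).degree u = #(connectionSet f i) := by
  rw [← SimpleGraph.card_neighborFinset_eq_degree, cayleyGraph_neighborFinset heven, card_map]

theorem cayleyEigenvalue_eq_neg_or_eq_sub (heven : ∀ x, f (-x) = f x) {i : ZMod p}
    [DecidableRel (cayleyGraph f i).Adj] {v k ℓ μ : ℕ} (h : (cayleyGraph f i).IsSRGWith v k ℓ μ)
    {N R : ℤ} (hk : (k : ℤ) = (N - 1) * R) (hℓ : (ℓ : ℤ) = N + R ^ 2 - 3 * R)
    (hμ : (μ : ℤ) = R ^ 2 - R) {x : Fin n → ZMod p} (hx : x ≠ 0) :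
    cayleyEigenvalue f x i = -R ∨ cayleyEigenvalue f x i = N - R :=
  h.eigenvalue_eq_neg_or_eq_sub hk hℓ hμ (cayleyGraph_adjMatrix_mulVec_chi heven x)
    (sum_chi_of_ne_zero p hx) (Function.ne_iff.mpr ⟨0, by simp⟩)

theorem cayleyEigenvalue_zero (i : ZMod p) :
    cayleyEigenvalue f 0 i = #(connectionSet f i) := by
  simp [cayleyEigenvalue, chi_zero_apply]

theorem sum_cayleyEigenvalue {x : Fin n → ZMod p} (hx : x ≠ 0) :
    ∑ i, cayleyEigenvalue f x i = -1 := by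
  simp only [cayleyEigenvalue, connectionSet]
  rw [sum_fiberwise, sum_erase_eq_sub (mem_univ 0), sum_chi_of_ne_zero p hx,
    AddChar.map_zero_eq_one, zero_sub]

theorem walsh_eq_one_add_sum_cayleyEigenvalue (heven : ∀ x, f (-x) = f x) (h0 : f 0 = 0)
    (x : Fin n → ZMod p) : walsh f x = 1 + ∑ i, psi p i * cayleyEigenvalue f x i := by
  have hneg : walsh f x = ∑ y, psi p (f y) * chi p x y := by
    rw [walsh, ← Equiv.sum_comp (Equiv.neg _)]
    refine sum_congr rfl fun y _ => ?_
    rw [← psi_apply, Equiv.neg_apply, heven, chi_apply, show ip x (-y) = -ip x y from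
      dotProduct_neg x y, sub_neg_eq_add, AddChar.map_add_eq_mul]
  rw [hneg, ← add_sum_erase _ _ (mem_univ 0), h0, AddChar.map_zero_eq_one,
    AddChar.map_zero_eq_one, one_mul, ← sum_fiberwise (univ.erase 0) f]
  simp only [cayleyEigenvalue, connectionSet, mul_sum]
  refine congrArg _ (sum_congr rfl fun i _ => sum_congr rfl fun y hy => ?_)
  rw [(mem_filter.mp hy).2]

end Cayley

theorem exists_eq_single_of_forall_eq_zero_or_eq {ι K : Type*} [Fintype ι] [DecidableEq ι]
    [Field K] [CharZero K] {N : K} (hN : N ≠ 0) {a : ι → K} (ha : ∀ i, a i = 0 ∨ a i = N)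
    (hsum : ∑ i, a i = N) : ∃ i₀, a = Pi.single i₀ N := by
  classical
  set T := ({i | a i = N} : Finset ι)
  have hite : ∀ i, a i = if i ∈ T then N else 0 := fun i => by
    rcases ha i with h | h <;> simp [T, h, hN.symm]
  have hT : #T = 1 := by
    have : (#T : K) * N = N := calc
      (#T : K) * N = ∑ i, a i := by
        rw [sum_congr rfl fun i _ => hite i, sum_ite_mem, univ_inter, sum_const, nsmul_eq_mul]
      _ = N := hsum
    exact_mod_cast mul_right_cancel₀ hN (this.trans (one_mul N).symm)
  obtain ⟨i₀, hi₀⟩ := card_eq_one.mp hT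
  refine ⟨i₀, funext fun i => ?_⟩
  simp [hite i, hi₀, Pi.single_apply]

section LatinSquareType

variable {p n : ℕ} [Fact (1 < p)] {f : (Fin n → ZMod p) → ZMod p} {N c : ℤ} {R : ZMod p → ℤ}

theorem sum_intCast_of_eq_ite (hR : ∀ i : ZMod p, R i = if i = 0 then c + 1 else c) :
    ∑ i, (R i : ℂ) = p * c + 1 := by
  have : ∀ i, (R i : ℂ) = c + if i = 0 then 1 else 0 := fun i => by
    rw [hR]; split_ifs <;> simp
  rw [sum_congr rfl fun i _ => this i, sum_add_distrib, sum_const, card_univ, ZMod.card,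
    nsmul_eq_mul, sum_ite_eq' univ (0 : ZMod p), if_pos (mem_univ _)]

theorem sum_psi_mul_of_eq_ite (hR : ∀ i : ZMod p, R i = if i = 0 then c + 1 else c) :
    ∑ i, psi p i * R i = 1 := by
  have : ∀ i, psi p i * R i = psi p i * c + if i = 0 then 1 else 0 := fun i => by
    rw [hR]; split_ifs with h <;> simp [h, mul_add]
  rw [sum_congr rfl fun i _ => this i, sum_add_distrib, ← sum_mul, sum_psi, zero_mul, zero_add,
    sum_ite_eq' univ (0 : ZMod p), if_pos (mem_univ _)]

theorem walsh_zero_of_card_connectionSet (heven : ∀ x, f (-x) = f x) (h0 : f 0 = 0)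
    (hR : ∀ i : ZMod p, R i = if i = 0 then c + 1 else c)
    (hcard : ∀ i, (#(connectionSet f i) : ℤ) = (N - 1) * R i) :
    walsh f 0 = N := by
  have hev : ∀ i, cayleyEigenvalue f 0 i = (N - 1) * R i := fun i => by
    rw [cayleyEigenvalue_zero]; exact_mod_cast hcard i
  simp only [walsh_eq_one_add_sum_cayleyEigenvalue heven h0, hev, mul_left_comm (psi p _),
    ← mul_sum, sum_psi_mul_of_eq_ite hR]
  ring

theorem exists_walsh_eq_mul_psi_of_ne_zero (heven : ∀ x, f (-x) = f x) (h0 : f 0 = 0)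
    (hN : N ≠ 0) (hc : p * c = N) (hR : ∀ i : ZMod p, R i = if i = 0 then c + 1 else c)
    {x : Fin n → ZMod p} (hx : x ≠ 0)
    (hev : ∀ i, cayleyEigenvalue f x i = -R i ∨ cayleyEigenvalue f x i = N - R i) :
    ∃ j, walsh f x = N * psi p j := by
  have hsum : ∑ i, (cayleyEigenvalue f x i + R i) = N := by
    rw [sum_add_distrib, sum_cayleyEigenvalue hx, sum_intCast_of_eq_ite hR, ← hc]
    push_cast; ring
  obtain ⟨j, hj⟩ := exists_eq_single_of_forall_eq_zero_or_eq (Int.cast_ne_zero.mpr hN)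
    (fun i => (hev i).imp (fun h => by rw [h]; ring) (fun h => by rw [h]; ring)) hsum
  have hevj : ∀ i, cayleyEigenvalue f x i = (Pi.single j (N : ℂ) : ZMod p → ℂ) i - R i :=
    fun i => by rw [← congrFun hj i]; ring
  refine ⟨j, ?_⟩
  simp only [walsh_eq_one_add_sum_cayleyEigenvalue heven h0, hevj, mul_sub, sum_sub_distrib,
    sum_psi_mul_of_eq_ite hR, Pi.single_apply, mul_ite, mul_zero, sum_ite_eq', mem_univ, if_true]
  ring

end LatinSquareType

open scoped Classical in
theorem stmt13_general (p m : ℕ) [Fact p.Prime] (hm : 1 ≤ m)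
    (f : (Fin (2 * m) → ZMod p) → ZMod p)
    (heven : ∀ x, f (-x) = f x) (h0 : f 0 = 0)
    (N : ℤ) (hN : N = (p : ℤ) ^ m ∨ N = -((p : ℤ) ^ m))
    (R : ZMod p → ℤ)
    (hR : ∀ i : ZMod p, R i = if i = 0 then N / p + 1 else N / p)
    (hSRG : ∀ i : ZMod p, ∃ k l mu : ℕ,
      (k : ℤ) = (N - 1) * R i ∧ (l : ℤ) = N + R i ^ 2 - 3 * R i ∧
      (mu : ℤ) = R i ^ 2 - R i ∧
      (cayleyGraph f i).IsSRGWith (p ^ (2 * m)) k l mu) :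
    (N = (p : ℤ) ^ m →
      ∃ fstar : (Fin (2 * m) → ZMod p) → ZMod p,
        ∀ x, walsh f x = zeta p ^ (fstar x).val * (p : ℂ) ^ m) ∧
    (N = -((p : ℤ) ^ m) →
      ∃ fstar : (Fin (2 * m) → ZMod p) → ZMod p,
        ∀ x, walsh f x = -(zeta p ^ (fstar x).val * (p : ℂ) ^ m)) := by
  have hpN : (p : ℤ) ∣ N := by
    rcases hN with rfl | rfl <;> simp [dvd_pow_self _ (Nat.one_le_iff_ne_zero.mp hm)]
  have hN0 : N ≠ 0 := by
    rcases hN with rfl | rfl <;> simp [(Fact.out : p.Prime).ne_zero]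
  have hcard : ∀ i, (#(connectionSet f i) : ℤ) = (N - 1) * R i := fun i => by
    obtain ⟨k, _, _, hk, _, _, hsrg⟩ := hSRG i
    rw [← hk, ← cayleyGraph_degree heven 0, hsrg.regular 0]
  have hwalsh : ∀ x, ∃ j, walsh f x = N * psi p j := fun x => by
    rcases eq_or_ne x 0 with rfl | hx
    · exact ⟨0, by rw [walsh_zero_of_card_connectionSet heven h0 hR hcard,
        AddChar.map_zero_eq_one, mul_one]⟩
    refine exists_walsh_eq_mul_psi_of_ne_zero heven h0 hN0 (Int.mul_ediv_cancel' hpN) hR hx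
      fun i => ?_
    obtain ⟨k, l, mu, hk, hl, hmu, hsrg⟩ := hSRG i
    exact cayleyEigenvalue_eq_neg_or_eq_sub heven hsrg hk hl hmu hx
  choose fstar hfstar using hwalsh
  refine ⟨fun hNp => ⟨fstar, fun x => ?_⟩, fun hNn => ⟨fstar, fun x => ?_⟩⟩
  · simp [hfstar, psi_apply, hNp, mul_comm]
  · simp [hfstar, psi_apply, hNn, mul_comm]

open scoped Classical in
/-- If `f : GF(p)^{2m} → GF(p)` is a feasible Latin square type function,
then `f` is regular bent: `W_f(x) = ζ^{f*(x)} p^m` for all `x`, for some dual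
`f* : GF(p)^{2m} → GF(p)`.  If `f` is of feasible negative Latin square type, then `f` is
`(-1)`-weakly regular bent: `W_f(x) = -ζ^{f*(x)} p^m` for all `x`. -/
theorem stmt13 (p m : ℕ) [Fact p.Prime] (hodd : p ≠ 2) (hm : 1 ≤ m)
    (f : (Fin (2 * m) → ZMod p) → ZMod p)
    (heven : ∀ x, f (-x) = f x) (h0 : f 0 = 0)
    (N : ℤ) (hN : N = (p : ℤ) ^ m ∨ N = -((p : ℤ) ^ m))
    (R : ZMod p → ℤ)
    (hR : ∀ i : ZMod p, R i = if i = 0 then N / p + 1 else N / p)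
    (hSRG : ∀ i : ZMod p, ∃ k l mu : ℕ,
      (k : ℤ) = (N - 1) * R i ∧ (l : ℤ) = N + R i ^ 2 - 3 * R i ∧
      (mu : ℤ) = R i ^ 2 - R i ∧
      (cayleyGraph f i).IsSRGWith (p ^ (2 * m)) k l mu) :
    (N = (p : ℤ) ^ m →
      ∃ fstar : (Fin (2 * m) → ZMod p) → ZMod p,
        ∀ x, walsh f x = zeta p ^ (fstar x).val * (p : ℂ) ^ m) ∧
    (N = -((p : ℤ) ^ m) →
      ∃ fstar : (Fin (2 * m) → ZMod p) → ZMod p,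
        ∀ x, walsh f x = -(zeta p ^ (fstar x).val * (p : ℂ) ^ m)) :=
  stmt13_general p m hm f heven h0 N hN R hR hSRG
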